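/- arXiv:0908.2501 — 2 statements merged into one kernel-verified Lean document; each statement's English description precedes it below -/
import Mathlib

section
/- (Discrete Sobolev inequality, L² version.) For every nonnegative integer n there exists C_n > 0 such that for every h > 0, every mesh function u with u ∈ L²_h and D₊ⁿu ∈ L²_h, and every integer k with 0 ≤ k ≤ n, one has ‖D₊ᵏu‖_{L²_h} ≤ C_n·(‖u‖_{L²_h} + ‖D₊ⁿu‖_{L²_h}). -/
noncomputable section

open Set Filter

/-- Forward discrete derivative `D₊u(n) = (u(n+1) - u(n))/h`. -/
def Dp (h : ℝ) (u : ℤ → ℝ) : ℤ → ℝ := fun n => (u (n + 1) - u n) / h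

/-- Backward discrete derivative `D₋u(n) = (u(n) - u(n-1))/h`. -/
def Dm (h : ℝ) (u : ℤ → ℝ) : ℤ → ℝ := fun n => (u n - u (n - 1)) / h

/-- Central discrete derivative `D₀u(n) = (u(n+1) - u(n-1))/(2h)`. -/
def D0 (h : ℝ) (u : ℤ → ℝ) : ℤ → ℝ := fun n => (u (n + 1) - u (n - 1)) / (2 * h)

/-- Shift operator `Eu(n) = u(n+1)`. -/
def Esh (u : ℤ → ℝ) : ℤ → ℝ := fun n => u (n + 1)

/-- Membership in `L²_h`: square-summability of the mesh function. -/
def MemL2 (u : ℤ → ℝ) : Prop := Summable fun n : ℤ => (u n) ^ 2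

/-- The discrete inner product `(u,v)_{L²_h} = Σₙ u(n)·v(n)·h`. -/
def ip2 (h : ℝ) (u v : ℤ → ℝ) : ℝ := ∑' n : ℤ, u n * v n * h

/-- The discrete `L²_h` norm. -/
def nrm (h : ℝ) (u : ℤ → ℝ) : ℝ := Real.sqrt (∑' n : ℤ, (u n) ^ 2 * h)

/-- The mesh weight `⟨x⟩ = √(x² + 1)` evaluated at the mesh point `x = n·h`. -/
def jp (h : ℝ) (n : ℤ) : ℝ := Real.sqrt (((n : ℝ) * h) ^ 2 + 1)


lemma memL2_shift (u : ℤ → ℝ) (hu : MemL2 u) : MemL2 (fun n => u (n + 1)) :=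
  hu.comp_injective (add_left_injective (1 : ℤ))

lemma memL2_shift' (u : ℤ → ℝ) (hu : MemL2 u) : MemL2 (fun n => u (n - 1)) :=
  hu.comp_injective (sub_left_injective (b := (1 : ℤ)))

lemma memL2_Dp (h : ℝ) (hh : 0 < h) (u : ℤ → ℝ) (hu : MemL2 u) : MemL2 (Dp h u) := by
  have hsum : Summable (fun n : ℤ => (2 / h ^ 2) * ((u (n + 1)) ^ 2 + (u n) ^ 2)) :=
    ((memL2_shift u hu).add hu).mul_left _
  apply Summable.of_nonneg_of_le (fun n => sq_nonneg _) _ hsum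
  intro n
  have h2 : (0:ℝ) < h ^ 2 := by positivity
  rw [Dp, div_pow]
  rw [div_le_iff₀ h2]
  have he : 2 / h ^ 2 * (u (n + 1) ^ 2 + u n ^ 2) * h ^ 2 = 2 * (u (n + 1) ^ 2 + u n ^ 2) := by
    field_simp
  rw [he]
  nlinarith [sq_nonneg (u (n+1) + u n)]

lemma summable_mul (f g : ℤ → ℝ) (hf : MemL2 f) (hg : MemL2 g) :
    Summable (fun n => f n * g n) := by
  have habs : Summable (fun n : ℤ => |f n * g n|) := by
    apply Summable.of_nonneg_of_le (fun n => abs_nonneg _) _ ((hf.add hg).div_const 2)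
    intro n
    rw [abs_mul]
    nlinarith [sq_nonneg (|f n| - |g n|), sq_abs (f n), sq_abs (g n)]
  exact habs.of_abs

lemma key_ineq (h : ℝ) (hh : 0 < h) (u : ℤ → ℝ) (hu : MemL2 u) :
    (∑' n : ℤ, (Dp h u n) ^ 2 * h) ≤
      ((∑' n : ℤ, (u n) ^ 2 * h) + (∑' n : ℤ, (Dp h (Dp h u) n) ^ 2 * h)) / 2 := by
  set v := Dp h u with hvdef
  set w := Dp h v with hwdef
  have hv : MemL2 v := memL2_Dp h hh u hu
  have hw : MemL2 w := memL2_Dp h hh v hv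
  have hu1 : MemL2 (fun n => u (n + 1)) := memL2_shift u hu
  have hv1 : MemL2 (fun n => v (n - 1)) := memL2_shift' v hv
  have hw1 : MemL2 (fun n => w (n - 1)) := memL2_shift' w hw
  have hA : Summable (fun n : ℤ => v n * u (n + 1)) := summable_mul _ _ hv hu1
  have hB : Summable (fun n : ℤ => v n * u n) := summable_mul _ _ hv hu
  have hf : Summable (fun n : ℤ => v (n - 1) * u n) := summable_mul _ _ hv1 hu
  -- step 1 : ∑ v² h = ∑ v (u(n+1) - u n)
  have step1 : (∑' n : ℤ, (v n) ^ 2 * h) = (∑' n : ℤ, v n * u (n+1)) - (∑' n : ℤ, v n * u n) := by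
    rw [← Summable.tsum_sub hA hB]
    congr 1; funext n
    have hvh : v n * h = u (n + 1) - u n := by
      rw [hvdef, Dp]; field_simp
    linear_combination (v n) * hvh
  have e1 : (∑' n : ℤ, v n * u (n + 1)) = ∑' n : ℤ, v (n - 1) * u n := by
    rw [← Equiv.tsum_eq (Equiv.addRight (1:ℤ)) (fun n => v (n - 1) * u n)]
    apply tsum_congr; intro n
    simp [Equiv.coe_addRight]
  have step2 : (∑' n : ℤ, (v n) ^ 2 * h) = ∑' n : ℤ, (v (n-1) * u n - v n * u n) := by
    rw [step1, e1, Summable.tsum_sub hf hB]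
  -- termwise bound
  have bound : ∀ n : ℤ, v (n-1) * u n - v n * u n ≤ ((w (n-1)) ^ 2 * h + (u n) ^ 2 * h) / 2 := by
    intro n
    have hrel : v n - v (n - 1) = h * w (n - 1) := by
      rw [hwdef, Dp]
      have : (n : ℤ) - 1 + 1 = n := by ring
      rw [this]
      field_simp
    have h2 : v (n-1) * u n - v n * u n = -(h * w (n-1) * u n) := by
      linear_combination (-(u n)) * hrel
    rw [h2]
    nlinarith [mul_nonneg (sq_nonneg (w (n-1) + u n)) hh.le]
  have hRsum : Summable (fun n : ℤ => ((w (n-1)) ^ 2 * h + (u n) ^ 2 * h) / 2) :=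
    ((hw1.mul_right h).add (hu.mul_right h)).div_const 2
  have step3 : (∑' n : ℤ, (v n) ^ 2 * h) ≤ ∑' n : ℤ, ((w (n-1)) ^ 2 * h + (u n) ^ 2 * h) / 2 := by
    rw [step2]
    exact Summable.tsum_le_tsum bound (hf.sub hB) hRsum
  have e2 : (∑' n : ℤ, (w (n-1)) ^ 2 * h) = ∑' n : ℤ, (w n) ^ 2 * h := by
    exact Equiv.tsum_eq (Equiv.subRight (1:ℤ)) (fun n => (w n) ^ 2 * h)
  calc (∑' n : ℤ, (v n) ^ 2 * h) ≤ ∑' n : ℤ, ((w (n-1)) ^ 2 * h + (u n) ^ 2 * h) / 2 := step3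
    _ = ((∑' n : ℤ, (w (n-1)) ^ 2 * h) + (∑' n : ℤ, (u n) ^ 2 * h)) / 2 := by
        rw [tsum_div_const, Summable.tsum_add (hw1.mul_right h) (hu.mul_right h)]
    _ = ((∑' n : ℤ, (u n) ^ 2 * h) + (∑' n : ℤ, (w n) ^ 2 * h)) / 2 := by rw [e2]; ring

lemma conv_max (n : ℕ) (b : ℕ → ℝ) (hconv : ∀ m, 2 * b (m + 1) ≤ b m + b (m + 2)) :
    ∀ k ≤ n, b k ≤ max (b 0) (b n) := by
  have hd : Monotone (fun m => b (m + 1) - b m) := by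
    apply monotone_nat_of_le_succ
    intro m
    have := hconv m
    show b (m + 1) - b m ≤ b (m + 2) - b (m + 1)
    linarith
  intro k hk
  rcases Nat.eq_zero_or_pos k with rfl | hk0
  · exact le_max_left _ _
  by_cases hsign : b k - b (k - 1) ≤ 0
  · -- nonincreasing up to k : b k ≤ b 0
    have h1 : b k - b 0 = ∑ i ∈ Finset.range k, (b (i + 1) - b i) := (Finset.sum_range_sub b k).symm
    have h2 : ∑ i ∈ Finset.range k, (b (i + 1) - b i) ≤ 0 := by
      apply Finset.sum_nonpos
      intro i hi
      rw [Finset.mem_range] at hi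
      have hik : i ≤ k - 1 := by omega
      have := hd hik
      simp only at this
      have hkk : k - 1 + 1 = k := by omega
      rw [hkk] at this
      linarith
    have : b k ≤ b 0 := by linarith
    exact this.trans (le_max_left _ _)
  · push_neg at hsign
    have h1 : b n - b k = ∑ i ∈ Finset.Ico k n, (b (i + 1) - b i) := by
      rw [Finset.sum_Ico_eq_sub _ hk, Finset.sum_range_sub b, Finset.sum_range_sub b]
      ring
    have h2 : (0:ℝ) ≤ ∑ i ∈ Finset.Ico k n, (b (i + 1) - b i) := by
      apply Finset.sum_nonneg
      intro i hi
      rw [Finset.mem_Ico] at hi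
      have hik : k - 1 ≤ i := by omega
      have := hd hik
      simp only at this
      have hkk : k - 1 + 1 = k := by omega
      rw [hkk] at this
      linarith
    have : b k ≤ b n := by linarith
    exact this.trans (le_max_right _ _)

/-- **Lemma 2.3 (1)** (discrete Sobolev inequality, `L²` version).  For every `n` there is
`Cₙ > 0`, independent of `h`, such that for every mesh function `u` with `u, D₊ⁿu ∈ L²_h` and
every `0 ≤ k ≤ n`, `‖D₊ᵏu‖_{L²_h} ≤ Cₙ (‖u‖_{L²_h} + ‖D₊ⁿu‖_{L²_h})`. -/
theorem discrete_sobolev_L2 (n : ℕ) :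
    ∃ C > (0 : ℝ), ∀ h : ℝ, 0 < h → ∀ u : ℤ → ℝ, MemL2 u → MemL2 ((Dp h)^[n] u) →
      ∀ k : ℕ, k ≤ n →
        nrm h ((Dp h)^[k] u) ≤ C * (nrm h u + nrm h ((Dp h)^[n] u)) := by
  refine ⟨1, one_pos, ?_⟩
  intro h hh u hu _hun k hk
  have hmem : ∀ m : ℕ, MemL2 ((Dp h)^[m] u) := by
    intro m
    induction m with
    | zero => simpa using hu
    | succ m ih =>
      rw [Function.iterate_succ_apply']
      exact memL2_Dp h hh _ ih
  set a : ℕ → ℝ := fun m => ∑' n : ℤ, (((Dp h)^[m] u) n) ^ 2 * h with ha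
  have hconv : ∀ m, 2 * a (m + 1) ≤ a m + a (m + 2) := by
    intro m
    have hkey := key_ineq h hh ((Dp h)^[m] u) (hmem m)
    have e1 : (Dp h)^[m + 1] u = Dp h ((Dp h)^[m] u) := Function.iterate_succ_apply' _ _ _
    have e2 : (Dp h)^[m + 2] u = Dp h (Dp h ((Dp h)^[m] u)) := by
      rw [Function.iterate_succ_apply', e1]
    simp only [ha, e1, e2]
    linarith
  have hmax := conv_max n a hconv k hk
  rw [one_mul]
  have h0 : nrm h u = Real.sqrt (a 0) := by
    simp only [ha, nrm, Function.iterate_zero_apply]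
  have hn : nrm h ((Dp h)^[n] u) = Real.sqrt (a n) := rfl
  have hk' : nrm h ((Dp h)^[k] u) = Real.sqrt (a k) := rfl
  rw [h0, hn, hk']
  calc Real.sqrt (a k) ≤ Real.sqrt (max (a 0) (a n)) := Real.sqrt_le_sqrt hmax
    _ ≤ Real.sqrt (a 0) + Real.sqrt (a n) := by
        rcases max_cases (a 0) (a n) with ⟨he, _⟩ | ⟨he, _⟩ <;> rw [he]
        · exact le_add_of_nonneg_right (Real.sqrt_nonneg _)
        · exact le_add_of_nonneg_left (Real.sqrt_nonneg _)
end
end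

section
/- For all nonnegative integers N, j, k there exists C > 0 such that for every h ∈ (0,1) and every mesh function u with ⟨x⟩^N u ∈ L²_h and ⟨x⟩^N D₊^{j+k} u ∈ L²_h, one has ‖⟨x⟩^N D₊ʲ u‖_{L²_h} ≤ C·(‖⟨x⟩^N u‖_{L²_h} + ‖⟨x⟩^N D₊^{j+k} u‖_{L²_h}). -/
noncomputable section

open Set Filter

lemma jp_one_le (h : ℝ) (n : ℤ) : 1 ≤ jp h n := by
  have h1 : (1:ℝ) = Real.sqrt 1 := by simp
  rw [h1, jp]
  exact Real.sqrt_le_sqrt (by nlinarith [sq_nonneg ((n:ℝ)*h)])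

lemma jp_pos (h : ℝ) (n : ℤ) : 0 < jp h n := lt_of_lt_of_le one_pos (jp_one_le h n)

lemma sqrt_lip (x y : ℝ) : |Real.sqrt (x^2+1) - Real.sqrt (y^2+1)| ≤ |x - y| := by
  set a := Real.sqrt (x^2+1) with ha
  set b := Real.sqrt (y^2+1) with hb
  have hax : a^2 = x^2+1 := Real.sq_sqrt (by positivity)
  have hbx : b^2 = y^2+1 := Real.sq_sqrt (by positivity)
  have hxa : |x| ≤ a := by
    have := Real.sqrt_le_sqrt (show x^2 ≤ x^2+1 by linarith)
    rwa [Real.sqrt_sq_eq_abs] at this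
  have hyb : |y| ≤ b := by
    have := Real.sqrt_le_sqrt (show y^2 ≤ y^2+1 by linarith)
    rwa [Real.sqrt_sq_eq_abs] at this
  have hapos : 0 < a := lt_of_lt_of_le one_pos (by rw [ha]; nlinarith [Real.sqrt_le_sqrt (show (1:ℝ) ≤ x^2+1 by nlinarith [sq_nonneg x]), Real.sqrt_one])
  have hbpos : 0 < b := lt_of_lt_of_le one_pos (by rw [hb]; nlinarith [Real.sqrt_le_sqrt (show (1:ℝ) ≤ y^2+1 by nlinarith [sq_nonneg y]), Real.sqrt_one])
  have key : |a - b| * (a + b) ≤ |x - y| * (a + b) := by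
    have e1 : |a - b| * (a + b) = |a^2 - b^2| := by
      rw [← abs_of_pos (show (0:ℝ) < a + b by linarith), ← abs_mul]
      ring_nf
    have e2 : |a^2 - b^2| = |x - y| * |x + y| := by
      rw [hax, hbx, ← abs_mul]; ring_nf
    have e3 : |x + y| ≤ a + b := (abs_add_le x y).trans (by linarith)
    calc |a - b| * (a + b) = |x - y| * |x + y| := by rw [e1, e2]
    _ ≤ |x - y| * (a + b) := by
        exact mul_le_mul_of_nonneg_left e3 (abs_nonneg _)
  exact le_of_mul_le_mul_right key (by linarith)

lemma jp_adj (h : ℝ) (n : ℤ) : |jp h n - jp h (n-1)| ≤ |h| := by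
  have := sqrt_lip ((n:ℝ)*h) (((n-1:ℤ):ℝ)*h)
  simp only [jp]
  convert this using 2
  push_cast; ring

lemma jp_adj' (h : ℝ) (n : ℤ) : |jp h (n+1) - jp h n| ≤ |h| := by
  have := jp_adj h (n+1)
  simpa using this

lemma jp_le2 (h : ℝ) (hh : h ∈ Set.Ioo (0:ℝ) 1) (n : ℤ) : jp h n ≤ 2 * jp h (n-1) := by
  have h1 := jp_adj h n
  have h2 := jp_one_le h (n-1)
  have h3 := abs_of_pos hh.1
  rw [h3] at h1
  have := abs_le.1 h1
  linarith [hh.2]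

lemma jp_le2' (h : ℝ) (hh : h ∈ Set.Ioo (0:ℝ) 1) (n : ℤ) : jp h (n-1) ≤ 2 * jp h n := by
  have h1 := jp_adj h n
  have h2 := jp_one_le h n
  have h3 := abs_of_pos hh.1
  rw [h3] at h1
  have := abs_le.1 h1
  linarith [hh.2]

lemma jp_le2_succ (h : ℝ) (hh : h ∈ Set.Ioo (0:ℝ) 1) (n : ℤ) : jp h (n+1) ≤ 2 * jp h n := by
  have := jp_le2 h hh (n+1); simpa using this

lemma jp_le2_succ' (h : ℝ) (hh : h ∈ Set.Ioo (0:ℝ) 1) (n : ℤ) : jp h n ≤ 2 * jp h (n+1) := by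
  have := jp_le2' h hh (n+1); simpa using this

lemma jpN_le (h : ℝ) (N : ℕ) {a b : ℤ} (hab : jp h a ≤ 2 * jp h b) :
    jp h a ^ N ≤ 2^N * jp h b ^ N := by
  calc jp h a ^ N ≤ (2 * jp h b) ^ N :=
        pow_le_pow_left₀ (le_of_lt (jp_pos h a)) hab N
  _ = 2^N * jp h b ^ N := mul_pow 2 _ N

/-- weight difference bound: `|⟨n⟩^M - ⟨n-1⟩^M| ≤ M·2^M·h·⟨n⟩^M`. -/
lemma Wdiff (h : ℝ) (hh : h ∈ Set.Ioo (0:ℝ) 1) (M : ℕ) (n : ℤ) :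
    |jp h n ^ M - jp h (n-1) ^ M| ≤ (M * 2^M) * h * jp h n ^ M := by
  rcases Nat.eq_zero_or_pos M with hM | hM
  · subst hM; simp
  have key : jp h n ^ M - jp h (n-1) ^ M
      = (∑ i ∈ Finset.range M, jp h n ^ i * jp h (n-1) ^ (M - 1 - i)) * (jp h n - jp h (n-1)) :=
    (geom_sum₂_mul (jp h n) (jp h (n-1)) M).symm
  rw [key, abs_mul]
  have hsum : |∑ i ∈ Finset.range M, jp h n ^ i * jp h (n-1) ^ (M - 1 - i)|
      ≤ M * (2^M * jp h n ^ M) := by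
    refine (Finset.abs_sum_le_sum_abs _ _).trans ?_
    have hterm : ∀ i ∈ Finset.range M,
        |jp h n ^ i * jp h (n-1) ^ (M - 1 - i)| ≤ 2^M * jp h n ^ M := by
      intro i hi
      have p1 : (0:ℝ) ≤ jp h n := (jp_pos h n).le
      have p2 : (0:ℝ) ≤ jp h (n-1) := (jp_pos h (n-1)).le
      rw [abs_of_nonneg (mul_nonneg (pow_nonneg p1 _) (pow_nonneg p2 _))]
      have h1 : jp h (n-1) ^ (M-1-i) ≤ (2 * jp h n) ^ (M-1-i) :=
        pow_le_pow_left₀ (le_of_lt (jp_pos h (n-1))) (jp_le2' h hh n) _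
      have h2 : jp h n ^ i * (2 * jp h n)^(M-1-i) = 2^(M-1-i) * jp h n ^ (i + (M-1-i)) := by
        rw [mul_pow, pow_add]; ring
      have hi' := Finset.mem_range.1 hi
      have h3 : i + (M - 1 - i) ≤ M := by omega
      have h4 : jp h n ^ (i + (M-1-i)) ≤ jp h n ^ M :=
        pow_le_pow_right₀ (jp_one_le h n) h3
      have h5 : (2:ℝ)^(M-1-i) ≤ 2^M := pow_le_pow_right₀ (by norm_num) (by omega)
      calc jp h n ^ i * jp h (n-1) ^ (M - 1 - i)
          ≤ jp h n ^ i * (2 * jp h n)^(M-1-i) :=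
            mul_le_mul_of_nonneg_left h1 (pow_nonneg p1 _)
        _ = 2^(M-1-i) * jp h n ^ (i + (M-1-i)) := h2
        _ ≤ 2^M * jp h n ^ M := by
            have h6 : (0:ℝ) < jp h n ^ (i + (M-1-i)) := pow_pos (jp_pos h n) _
            nlinarith [pow_pos (show (0:ℝ) < 2 by norm_num) (M-1-i),
              pow_pos (show (0:ℝ) < 2 by norm_num) M]
    calc ∑ i ∈ Finset.range M, |jp h n ^ i * jp h (n-1) ^ (M - 1 - i)|
        ≤ ∑ _i ∈ Finset.range M, 2^M * jp h n ^ M := Finset.sum_le_sum hterm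
      _ = M * (2^M * jp h n ^ M) := by
          rw [Finset.sum_const, Finset.card_range, nsmul_eq_mul]
  have hd : |jp h n - jp h (n-1)| ≤ h := by
    have := jp_adj h n; rwa [abs_of_pos hh.1] at this
  calc |∑ i ∈ Finset.range M, jp h n ^ i * jp h (n-1) ^ (M - 1 - i)| * |jp h n - jp h (n-1)|
      ≤ (M * (2^M * jp h n ^ M)) * h := by
        apply mul_le_mul hsum hd (abs_nonneg _)
        have p1 : (0:ℝ) ≤ jp h n := (jp_pos h n).le
        have : (0:ℝ) ≤ jp h n ^ M := pow_nonneg p1 M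
        positivity
    _ = (M * 2^M) * h * jp h n ^ M := by ring

lemma summable_shift (f : ℤ → ℝ) (c : ℤ) (hf : Summable f) :
    Summable (fun n => f (n + c)) := by
  have := (Equiv.addRight c).summable_iff (f := f)
  rw [← this] at hf
  exact hf

lemma tsum_shift (f : ℤ → ℝ) (c : ℤ) : (∑' n : ℤ, f (n + c)) = ∑' n : ℤ, f n :=
  (Equiv.addRight c).tsum_eq f

lemma sq_add_le (x y : ℝ) : (x + y)^2 ≤ 2*x^2 + 2*y^2 := by nlinarith [sq_nonneg (x - y)]

/-- Summability propagates to the discrete derivative (h fixed). -/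
lemma summable_Dp (N : ℕ) {h : ℝ} (hh : h ∈ Set.Ioo (0:ℝ) 1) {v : ℤ → ℝ}
    (hv : Summable (fun n => (jp h n ^ N * v n)^2)) :
    Summable (fun n => (jp h n ^ N * Dp h v n)^2) := by
  set g := fun n : ℤ => (jp h n ^ N * v n)^2 with hg
  have hg1 : Summable (fun n : ℤ => (2/h^2) * (4^N * g (n + 1) + g n)) := by
    apply Summable.mul_left
    exact ((summable_shift g 1 hv).mul_left _).add hv
  apply Summable.of_nonneg_of_le (fun n => sq_nonneg _) _ hg1
  intro n
  have hDv : jp h n ^ N * Dp h v n = (jp h n ^ N * v (n+1) - jp h n ^ N * v n) / h := by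
    simp only [Dp]; ring
  have hb : (jp h n ^ N * Dp h v n)^2
      = (jp h n ^ N * v (n+1) - jp h n ^ N * v n)^2 / h^2 := by
    rw [hDv, div_pow]
  rw [hb]
  rw [div_le_iff₀ (pow_pos hh.1 2)]
  have key : (jp h n ^ N * v (n+1))^2 ≤ 4^N * g (n+1) := by
    have h1 : jp h n ^ N ≤ 2^N * jp h (n+1) ^ N := jpN_le h N (jp_le2_succ' h hh n)
    have h2 : |jp h n ^ N * v (n+1)| ≤ 2^N * |jp h (n+1) ^ N * v (n+1)| := by
      rw [abs_mul, abs_mul]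
      have p1 : (0:ℝ) ≤ jp h n ^ N := pow_nonneg (jp_pos h n).le N
      have p2 : (0:ℝ) ≤ jp h (n+1) ^ N := pow_nonneg (jp_pos h (n+1)).le N
      rw [abs_of_nonneg p1, abs_of_nonneg p2]
      calc jp h n ^ N * |v (n+1)| ≤ (2^N * jp h (n+1) ^ N) * |v (n+1)| :=
            mul_le_mul_of_nonneg_right h1 (abs_nonneg _)
        _ = 2^N * (jp h (n+1)^N * |v (n+1)|) := by ring
    have h3 := sq_abs (jp h n ^ N * v (n+1))
    have h4 := sq_abs (jp h (n+1) ^ N * v (n+1))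
    have h5 : |jp h n ^ N * v (n+1)|^2 ≤ (2^N * |jp h (n+1) ^ N * v (n+1)|)^2 := by
      apply pow_le_pow_left₀ (abs_nonneg _) h2
    rw [h3] at h5
    calc (jp h n ^ N * v (n+1))^2 ≤ (2^N * |jp h (n+1) ^ N * v (n+1)|)^2 := h5
      _ = 4^N * |jp h (n+1) ^ N * v (n+1)|^2 := by
          rw [mul_pow]; congr 1
          rw [← pow_mul, mul_comm N 2, pow_mul]
          norm_num
      _ = 4^N * g (n+1) := by rw [h4]
  have expand := sq_add_le (jp h n ^ N * v (n+1)) (-(jp h n ^ N * v n))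
  have : (jp h n ^ N * v (n+1) - jp h n ^ N * v n)^2
      ≤ 2 * (jp h n ^ N * v (n+1))^2 + 2 * (jp h n ^ N * v n)^2 := by
    have e : jp h n ^ N * v (n+1) - jp h n ^ N * v n
        = jp h n ^ N * v (n+1) + -(jp h n ^ N * v n) := by ring
    rw [e]
    simpa using expand
  calc (jp h n ^ N * v (n+1) - jp h n ^ N * v n)^2
      ≤ 2 * (jp h n ^ N * v (n+1))^2 + 2 * (jp h n ^ N * v n)^2 := this
    _ ≤ 2 * (4^N * g (n+1)) + 2 * g n := by
        have : (jp h n ^ N * v n)^2 = g n := rfl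
        nlinarith [key]
    _ = 2/h^2 * (4^N * g (n+1) + g n) * h^2 := by
        have hne : (h:ℝ) ≠ 0 := ne_of_gt hh.1
        field_simp

lemma abs_mul_le_half (a b : ℝ) : |a * b| ≤ (a^2 + b^2)/2 := by
  rw [abs_mul]
  nlinarith [sq_nonneg (|a| - |b|), sq_abs a, sq_abs b, abs_nonneg a, abs_nonneg b]

lemma amgm {d : ℝ} (hd : 0 < d) (a b : ℝ) : a * b ≤ d/2 * a^2 + 1/(2*d) * b^2 := by
  have h1 : 0 ≤ (d*a - b)^2 := sq_nonneg _
  have h2 : d * (a*b) ≤ d * (d/2 * a^2 + 1/(2*d) * b^2) := by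
    have : d * (d/2 * a^2 + 1/(2*d) * b^2) = d^2/2*a^2 + b^2/2 := by
      field_simp
    rw [this]; nlinarith
  exact le_of_mul_le_mul_left h2 hd

lemma summable_prod {a b : ℤ → ℝ} (ha : Summable fun n => (a n)^2)
    (hb : Summable fun n => (b n)^2) : Summable (fun n => a n * b n) := by
  apply Summable.of_abs
  apply Summable.of_nonneg_of_le (fun n => abs_nonneg _) (fun n => abs_mul_le_half _ _)
  exact (ha.add hb).div_const 2

lemma wsq_le (h : ℝ) (N : ℕ) {a b : ℤ} (hab : jp h a ≤ 2 * jp h b) (x : ℝ) :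
    (jp h a ^ N * x)^2 ≤ 4^N * (jp h b ^ N * x)^2 := by
  have h1 : jp h a ^ N ≤ 2^N * jp h b ^ N := jpN_le h N hab
  have p1 : (0:ℝ) ≤ jp h a ^ N := pow_nonneg (jp_pos h a).le N
  have h2 : (jp h a ^ N)^2 ≤ (2^N * jp h b ^ N)^2 := pow_le_pow_left₀ p1 h1 2
  have h3 : ((2:ℝ)^N)^2 = 4^N := by
    rw [← pow_mul, mul_comm N 2, pow_mul]; norm_num
  calc (jp h a ^ N * x)^2 = (jp h a ^ N)^2 * x^2 := by ring
    _ ≤ (2^N * jp h b ^ N)^2 * x^2 := mul_le_mul_of_nonneg_right h2 (sq_nonneg x)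
    _ = ((2:ℝ)^N)^2 * ((jp h b ^ N)^2 * x^2) := by ring
    _ = 4^N * (jp h b ^ N * x)^2 := by rw [h3]; ring

lemma nrm_nonneg (h : ℝ) (f : ℤ → ℝ) : 0 ≤ nrm h f := Real.sqrt_nonneg _

set_option maxHeartbeats 2000000 in
lemma stepA (N : ℕ) {ε : ℝ} (hε : 0 < ε) : ∃ C > (0:ℝ), ∀ h ∈ Set.Ioo (0:ℝ) 1, ∀ v : ℤ → ℝ,
    Summable (fun n => (jp h n ^ N * v n)^2) →
    nrm h (fun n => jp h n ^ N * Dp h v n)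
      ≤ ε * nrm h (fun n => jp h n ^ N * Dp h (Dp h v) n)
        + C * nrm h (fun n => jp h n ^ N * v n) := by
  classical
  set C₁ : ℝ := (2*N) * 2^(2*N) with hC₁
  have hC₁0 : 0 ≤ C₁ := by positivity
  set K : ℝ := 4^N/ε^2 + C₁*(C₁+1) with hK
  have hK0 : 0 < K := by positivity
  refine ⟨Real.sqrt K, Real.sqrt_pos.2 hK0, ?_⟩
  intro h hh v hsum0
  have hpos := hh.1
  have hne : h ≠ 0 := ne_of_gt hpos
  set w : ℤ → ℝ := fun n => jp h n ^ N with hw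
  set Dv : ℤ → ℝ := Dp h v with hDv
  set D2v : ℤ → ℝ := Dp h Dv with hD2v
  set g0 : ℤ → ℝ := fun n => (w n * v n)^2 with hg0d
  set g1 : ℤ → ℝ := fun n => (w n * Dv n)^2 with hg1d
  set g2 : ℤ → ℝ := fun n => (w n * D2v n)^2 with hg2d
  have sg0 : Summable g0 := hsum0
  have sg0' : Summable (fun n : ℤ => (jp h n ^ N * v n)^2) := by
    simpa only [hg0d, hw] using hsum0
  have sg1 : Summable g1 := summable_Dp N hh hsum0
  have sg2 : Summable g2 := summable_Dp N hh sg1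
  set S : ℝ := ∑' n : ℤ, g1 n * h with hS
  set A0 : ℝ := ∑' n : ℤ, g0 n * h with hA0
  set A2 : ℝ := ∑' n : ℤ, g2 n * h with hA2
  have hS0 : 0 ≤ S := tsum_nonneg (fun n => mul_nonneg (sq_nonneg _) hpos.le)
  have hA00 : 0 ≤ A0 := tsum_nonneg (fun n => mul_nonneg (sq_nonneg _) hpos.le)
  have hA20 : 0 ≤ A2 := tsum_nonneg (fun n => mul_nonneg (sq_nonneg _) hpos.le)
  clear_value C₁ K w Dv D2v g0 g1 g2 S A0 A2
  -- the three norms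
  have hnrm1 : nrm h (fun n => jp h n ^ N * Dv n) = Real.sqrt S := by
    unfold nrm; rw [hS]; congr 1
    exact tsum_congr fun n => by simp only [hg1d, hw]
  have hnrm2 : nrm h (fun n => jp h n ^ N * D2v n) = Real.sqrt A2 := by
    unfold nrm; rw [hA2]; congr 1
    exact tsum_congr fun n => by simp only [hg2d, hw]
  have hnrm0 : nrm h (fun n => jp h n ^ N * v n) = Real.sqrt A0 := by
    unfold nrm; rw [hA0]; congr 1
    exact tsum_congr fun n => by simp only [hg0d, hw]
  rw [hnrm1, hnrm2, hnrm0]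
  -- key quadratic estimate : S ≤ ε^2 * A2 + K * A0
  have key : S ≤ ε^2 * A2 + K * A0 := by
    set P : ℤ → ℝ := fun n => (w n)^2 * Dv n with hP
    clear_value P
    have sg0w : Summable (fun n => (w n * v n)^2) := by simpa only [hg0d] using sg0
    have sg1w : Summable (fun n => (w n * Dv n)^2) := by simpa only [hg1d] using sg1
    have sWv : Summable (fun n => (w n * v (n+1))^2) := by
      refine Summable.of_nonneg_of_le (fun n => sq_nonneg _) (fun n => ?_)
        ((summable_shift (fun n => (jp h n ^ N * v n)^2) 1 sg0').mul_left (4^N))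
      simp only [hw]
      exact wsq_le h N (jp_le2_succ' h hh n) (v (n+1))
    have sPv : Summable (fun n => P n * v n) := by
      have he : (fun n : ℤ => P n * v n) = fun n => (w n * Dv n) * (w n * v n) := by
        funext n; simp only [hP]; ring
      rw [he]; exact summable_prod sg1w sg0w
    have sPv1 : Summable (fun n => P n * v (n+1)) := by
      have he : (fun n : ℤ => P n * v (n+1)) = fun n => (w n * Dv n) * (w n * v (n+1)) := by
        funext n; simp only [hP]; ring
      rw [he]; exact summable_prod sg1w sWv
    have sPv1' : Summable (fun n => P (n-1) * v n) := by
      have h3 := summable_shift (fun n => P n * v (n+1)) (-1) sPv1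
      have h4 : (fun n : ℤ => P (n + -1) * v (n + -1 + 1)) = fun n => P (n-1) * v n := by
        funext n
        rw [show n + -1 + 1 = n by ring, show n + -1 = n - 1 by ring]
      rwa [h4] at h3
    have step1 : ∀ n : ℤ, g1 n * h = P n * v (n+1) - P n * v n := by
      intro n
      simp only [hg1d, hP, hDv, Dp]
      field_simp
    have e2 : (∑' n : ℤ, P n * v (n+1)) = ∑' n : ℤ, P (n-1) * v n := by
      have h5 := tsum_shift (fun n => P (n-1) * v n) 1
      rw [← h5]
      apply tsum_congr
      intro n
      norm_num
    have idS : S = ∑' n : ℤ, (P (n-1) - P n) * v n := by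
      rw [hS]
      calc (∑' n : ℤ, g1 n * h) = ∑' n : ℤ, (P n * v (n+1) - P n * v n) := tsum_congr step1
        _ = (∑' n : ℤ, P n * v (n+1)) - ∑' n : ℤ, P n * v n := Summable.tsum_sub sPv1 sPv
        _ = (∑' n : ℤ, P (n-1) * v n) - ∑' n : ℤ, P n * v n := by rw [e2]
        _ = ∑' n : ℤ, (P (n-1) * v n - P n * v n) := (Summable.tsum_sub sPv1' sPv).symm
        _ = ∑' n : ℤ, (P (n-1) - P n) * v n := by
            apply tsum_congr; intro n; ring
    set c1 : ℝ := 4^N/(2*ε^2) + C₁*(C₁+1)/2 with hc1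
    set bound : ℤ → ℝ := fun n => c1 * (g0 n * h) + ε^2/2 * (g2 (n-1) * h) + 1/2 * (g1 n * h)
      with hbound
    clear_value bound
    -- pointwise bound
    have hptw : ∀ n : ℤ, (P (n-1) - P n) * v n ≤ bound n := by
      intro n
      have hid : P (n-1) - P n
          = -(h * (w (n-1))^2 * D2v (n-1)) + ((w (n-1))^2 - (w n)^2) * Dv n := by
        have hD2 : D2v (n-1) = (Dv n - Dv (n-1))/h := by
          simp only [hD2v, Dp]
          norm_num
        simp only [hP]
        rw [hD2]
        field_simp
        ring
      have t1 : -(h * (w (n-1))^2 * D2v (n-1)) * v n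
          ≤ h * (ε^2/2 * g2 (n-1) + 4^N/(2*ε^2) * g0 n) := by
        have e1 : -(h * (w (n-1))^2 * D2v (n-1)) * v n
            = h * (-((w (n-1) * D2v (n-1)) * (w (n-1) * v n))) := by ring
        have e2' : -((w (n-1) * D2v (n-1)) * (w (n-1) * v n))
            ≤ |(w (n-1) * D2v (n-1))| * |(w (n-1) * v n)| := by
          rw [← abs_mul]
          exact neg_le_abs _
        have e3 : |(w (n-1) * D2v (n-1))| * |(w (n-1) * v n)|
            ≤ ε^2/2 * g2 (n-1) + 4^N/(2*ε^2) * g0 n := by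
          have am := amgm (show (0:ℝ) < ε^2 by positivity)
            |(w (n-1) * D2v (n-1))| |(w (n-1) * v n)|
          have hsh : (w (n-1) * v n)^2 ≤ 4^N * g0 n := by
            simp only [hg0d, hw]
            exact wsq_le h N (jp_le2' h hh n) (v n)
          have habs2 : |(w (n-1) * D2v (n-1))|^2 = g2 (n-1) := by
            rw [sq_abs, hg2d]
          have habs0 : |(w (n-1) * v n)|^2 = (w (n-1) * v n)^2 := sq_abs _
          calc |(w (n-1) * D2v (n-1))| * |(w (n-1) * v n)|
              ≤ ε^2/2 * |(w (n-1) * D2v (n-1))|^2 + 1/(2*ε^2) * |(w (n-1) * v n)|^2 := am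
            _ = ε^2/2 * g2 (n-1) + 1/(2*ε^2) * (w (n-1) * v n)^2 := by rw [habs2, habs0]
            _ ≤ ε^2/2 * g2 (n-1) + 1/(2*ε^2) * (4^N * g0 n) := by
                have hp : (0:ℝ) < 1/(2*ε^2) := by positivity
                nlinarith
            _ = ε^2/2 * g2 (n-1) + 4^N/(2*ε^2) * g0 n := by ring
        calc -(h * (w (n-1))^2 * D2v (n-1)) * v n
            = h * (-((w (n-1) * D2v (n-1)) * (w (n-1) * v n))) := e1
          _ ≤ h * (|(w (n-1) * D2v (n-1))| * |(w (n-1) * v n)|) :=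
              mul_le_mul_of_nonneg_left e2' hpos.le
          _ ≤ h * (ε^2/2 * g2 (n-1) + 4^N/(2*ε^2) * g0 n) :=
              mul_le_mul_of_nonneg_left e3 hpos.le
      have t2 : ((w (n-1))^2 - (w n)^2) * Dv n * v n
          ≤ C₁ * h * ((C₁+1)/2 * g0 n + (1/(C₁+1))/2 * g1 n) := by
        have hWd : |(w (n-1))^2 - (w n)^2| ≤ C₁ * h * (w n)^2 := by
          have hWn : (w n)^2 = jp h n ^ (2*N) := by
            rw [hw, ← pow_mul, mul_comm]
          have hWn1 : (w (n-1))^2 = jp h (n-1) ^ (2*N) := by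
            rw [hw, ← pow_mul, mul_comm]
          rw [hWn, hWn1, abs_sub_comm]
          refine (Wdiff h hh (2*N) n).trans (le_of_eq ?_)
          rw [hC₁]; push_cast; ring
        have hμ : (0:ℝ) < 1/(C₁+1) := one_div_pos.2 (by linarith)
        have am := amgm hμ |w n * Dv n| |w n * v n|
        have e4 : ((w (n-1))^2 - (w n)^2) * Dv n * v n
            ≤ |(w (n-1))^2 - (w n)^2| * (|Dv n| * |v n|) := by
          calc ((w (n-1))^2 - (w n)^2) * Dv n * v n
              ≤ |((w (n-1))^2 - (w n)^2) * Dv n * v n| := le_abs_self _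
            _ = |(w (n-1))^2 - (w n)^2| * (|Dv n| * |v n|) := by
                rw [abs_mul, abs_mul]; ring
        have e6 : (w n)^2 * (|Dv n| * |v n|) = |w n * Dv n| * |w n * v n| := by
          have pw : (0:ℝ) ≤ w n := by
            simp only [hw]; exact pow_nonneg (jp_pos h n).le N
          rw [abs_mul, abs_mul, abs_of_nonneg pw]
          ring
        have e5 : |w n * Dv n| * |w n * v n|
            ≤ (1/(C₁+1))/2 * g1 n + (C₁+1)/2 * g0 n := by
          have habs1 : |w n * Dv n|^2 = g1 n := by rw [sq_abs, hg1d]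
          have habs0 : |w n * v n|^2 = g0 n := by rw [sq_abs, hg0d]
          have hne1 : C₁ + 1 ≠ 0 := by linarith
          have hfe : 1/(2*(1/(C₁+1))) = (C₁+1)/2 := by
            field_simp
          calc |w n * Dv n| * |w n * v n|
              ≤ (1/(C₁+1))/2 * |w n * Dv n|^2 + 1/(2*(1/(C₁+1))) * |w n * v n|^2 := am
            _ = (1/(C₁+1))/2 * g1 n + (C₁+1)/2 * g0 n := by rw [habs1, habs0, hfe]
        have hprod : (0:ℝ) ≤ |Dv n| * |v n| := mul_nonneg (abs_nonneg _) (abs_nonneg _)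
        calc ((w (n-1))^2 - (w n)^2) * Dv n * v n
            ≤ |(w (n-1))^2 - (w n)^2| * (|Dv n| * |v n|) := e4
          _ ≤ (C₁ * h * (w n)^2) * (|Dv n| * |v n|) :=
              mul_le_mul_of_nonneg_right hWd hprod
          _ = (C₁ * h) * ((w n)^2 * (|Dv n| * |v n|)) := by ring
          _ = (C₁ * h) * (|w n * Dv n| * |w n * v n|) := by rw [e6]
          _ ≤ C₁ * h * ((1/(C₁+1))/2 * g1 n + (C₁+1)/2 * g0 n) :=
              mul_le_mul_of_nonneg_left e5 (mul_nonneg hC₁0 hpos.le)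
          _ = C₁ * h * ((C₁+1)/2 * g0 n + (1/(C₁+1))/2 * g1 n) := by ring
      have hsum : (P (n-1) - P n) * v n
          ≤ h * (ε^2/2 * g2 (n-1) + 4^N/(2*ε^2) * g0 n)
            + C₁ * h * ((C₁+1)/2 * g0 n + (1/(C₁+1))/2 * g1 n) := by
        rw [hid, add_mul]
        exact add_le_add t1 t2
      refine hsum.trans ?_
      -- compare with bound n
      have hg1n : (0:ℝ) ≤ g1 n := by simp only [hg1d]; exact sq_nonneg _
      have hfrac : C₁ * (1/(C₁+1)) ≤ 1 := by
        rw [mul_one_div]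
        exact (div_le_one (by linarith)).2 (by linarith)
      have hkey : C₁ * h * ((1/(C₁+1))/2 * g1 n) ≤ 1/2 * (g1 n * h) := by
        have h1 := mul_le_mul_of_nonneg_right hfrac (mul_nonneg hpos.le hg1n)
        rw [one_mul] at h1
        linarith
      simp only [hbound, hc1]
      linarith [hkey]
    -- summability of both sides
    have sLHS : Summable (fun n => (P (n-1) - P n) * v n) := by
      have he : (fun n : ℤ => (P (n-1) - P n) * v n)
          = fun n => P (n-1) * v n - P n * v n := funext fun n => by ring
      rw [he]; exact sPv1'.sub sPv
    have sg2' : Summable (fun n => g2 (n-1) * h) := by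
      have h3 := summable_shift (fun n => g2 n * h) (-1) (sg2.mul_right h)
      have h4 : (fun n : ℤ => g2 (n + -1) * h) = fun n => g2 (n-1) * h := by
        funext n; rw [show n + -1 = n - 1 by ring]
      rwa [h4] at h3
    have hA2' : (∑' n : ℤ, g2 (n-1) * h) = A2 := by
      rw [hA2]
      have h5 := tsum_shift (fun n => g2 n * h) (-1)
      have h4 : (fun n : ℤ => g2 (n + -1) * h) = fun n => g2 (n-1) * h := by
        funext n; rw [show n + -1 = n - 1 by ring]
      rw [← h5]
      exact tsum_congr fun n => by rw [show n + -1 = n - 1 by ring]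
    have sBound : Summable bound := by
      rw [hbound]
      exact (((sg0.mul_right h).mul_left _).add (sg2'.mul_left _)).add
        ((sg1.mul_right h).mul_left _)
    have hSle : S ≤ ∑' n, bound n := by
      rw [idS]
      exact Summable.tsum_le_tsum hptw sLHS sBound
    have hbsum : (∑' n, bound n) = c1 * A0 + ε^2/2 * A2 + 1/2 * S := by
      rw [hbound]
      rw [Summable.tsum_add (((sg0.mul_right h).mul_left _).add (sg2'.mul_left _))
        ((sg1.mul_right h).mul_left _)]
      rw [Summable.tsum_add ((sg0.mul_right h).mul_left _) (sg2'.mul_left _)]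
      rw [tsum_mul_left, tsum_mul_left, tsum_mul_left, hA2', ← hA0, ← hS]
    rw [hbsum] at hSle
    rw [hc1] at hSle
    rw [hK]
    have e7 : (4:ℝ)^N/ε^2 = 2 * (4^N/(2*ε^2)) := by
      field_simp
    rw [e7]
    linarith
  -- conclude from key
  have hsq : ε^2 * A2 + K * A0 ≤ (ε * Real.sqrt A2 + Real.sqrt K * Real.sqrt A0)^2 := by
    have s2 : (Real.sqrt A2)^2 = A2 := Real.sq_sqrt hA20
    have s0 : (Real.sqrt A0)^2 = A0 := Real.sq_sqrt hA00
    have sK : (Real.sqrt K)^2 = K := Real.sq_sqrt hK0.le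
    nlinarith [mul_nonneg (mul_nonneg hε.le (Real.sqrt_nonneg A2))
      (mul_nonneg (Real.sqrt_nonneg K) (Real.sqrt_nonneg A0))]
  calc Real.sqrt S ≤ Real.sqrt (ε^2 * A2 + K * A0) := Real.sqrt_le_sqrt key
    _ ≤ Real.sqrt ((ε * Real.sqrt A2 + Real.sqrt K * Real.sqrt A0)^2) :=
        Real.sqrt_le_sqrt hsq
    _ = ε * Real.sqrt A2 + Real.sqrt K * Real.sqrt A0 := by
        rw [Real.sqrt_sq (by positivity)]

/-- Weighted norm of the `i`-th discrete derivative. -/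
def AA (N : ℕ) (h : ℝ) (u : ℤ → ℝ) (i : ℕ) : ℝ :=
  nrm h (fun n => jp h n ^ N * (Dp h)^[i] u n)

lemma AA_nonneg (N : ℕ) (h : ℝ) (u : ℤ → ℝ) (i : ℕ) : 0 ≤ AA N h u i :=
  Real.sqrt_nonneg _

lemma sumIter (N : ℕ) {h : ℝ} (hh : h ∈ Set.Ioo (0:ℝ) 1) {u : ℤ → ℝ}
    (hu : Summable (fun n => (jp h n ^ N * u n)^2)) (i : ℕ) :
    Summable (fun n => (jp h n ^ N * (Dp h)^[i] u n)^2) := by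
  induction i with
  | zero => simpa using hu
  | succ i ih =>
      have : (fun n => (jp h n ^ N * (Dp h)^[i+1] u n)^2)
          = fun n => (jp h n ^ N * Dp h ((Dp h)^[i] u) n)^2 := by
        funext n; rw [Function.iterate_succ_apply']
      rw [this]
      exact summable_Dp N hh ih

lemma stepIter (N : ℕ) {ε : ℝ} (hε : 0 < ε) : ∃ C > (0:ℝ), ∀ h ∈ Set.Ioo (0:ℝ) 1,
    ∀ u : ℤ → ℝ, Summable (fun n => (jp h n ^ N * u n)^2) → ∀ i : ℕ,
    AA N h u (i+1) ≤ ε * AA N h u (i+1+1) + C * AA N h u i := by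
  obtain ⟨C, hC, hstep⟩ := stepA N hε
  refine ⟨C, hC, ?_⟩
  intro h hh u hu i
  have h1 := hstep h hh ((Dp h)^[i] u) (sumIter N hh hu i)
  have e1 : (fun n => jp h n ^ N * (Dp h)^[i+1] u n)
      = fun n => jp h n ^ N * Dp h ((Dp h)^[i] u) n := by
    funext n; rw [Function.iterate_succ_apply']
  have e2 : (fun n => jp h n ^ N * (Dp h)^[i+1+1] u n)
      = fun n => jp h n ^ N * Dp h (Dp h ((Dp h)^[i] u)) n := by
    funext n; rw [Function.iterate_succ_apply', Function.iterate_succ_apply']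
  simp only [AA, e1, e2]
  exact h1

lemma iterLem (N : ℕ) : ∀ m : ℕ, ∀ i, i < m → ∀ ε : ℝ, 0 < ε → ∃ C > (0:ℝ),
    ∀ h ∈ Set.Ioo (0:ℝ) 1, ∀ u : ℤ → ℝ, Summable (fun n => (jp h n ^ N * u n)^2) →
    AA N h u i ≤ ε * AA N h u m + C * AA N h u 0 := by
  intro m
  induction m with
  | zero => intro i hi; exact absurd hi (Nat.not_lt_zero i)
  | succ m IH =>
      -- first : the top-index bound
      have Bm : ∀ ε : ℝ, 0 < ε → ∃ C > (0:ℝ), ∀ h ∈ Set.Ioo (0:ℝ) 1, ∀ u : ℤ → ℝ,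
          Summable (fun n => (jp h n ^ N * u n)^2) →
          AA N h u m ≤ ε * AA N h u (m+1) + C * AA N h u 0 := by
        intro ε hε
        cases m with
        | zero =>
            exact ⟨1, one_pos, fun h hh u hu => by
              have := AA_nonneg N h u 1
              nlinarith [AA_nonneg N h u 0]⟩
        | succ m' =>
            obtain ⟨Cd, hCd, hst⟩ := stepIter N (show (0:ℝ) < ε/2 by positivity)
            obtain ⟨C3, hC3, h3⟩ := IH m' (Nat.lt_succ_self m') (1/(2*Cd)) (by positivity)
            refine ⟨2*Cd*C3, by positivity, ?_⟩
            intro h hh u hu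
            have ha := hst h hh u hu m'
            have hb := h3 h hh u hu
            have hCd' : Cd * (1/(2*Cd)) = 1/2 := by field_simp
            have h4 : Cd * AA N h u m' ≤ 1/2 * AA N h u (m'+1) + Cd * C3 * AA N h u 0 := by
              have := mul_le_mul_of_nonneg_left hb hCd.le
              calc Cd * AA N h u m' ≤ Cd * (1/(2*Cd) * AA N h u (m'+1) + C3 * AA N h u 0) := this
                _ = (Cd * (1/(2*Cd))) * AA N h u (m'+1) + Cd * C3 * AA N h u 0 := by ring
                _ = 1/2 * AA N h u (m'+1) + Cd * C3 * AA N h u 0 := by rw [hCd']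
            linarith
      intro i hi ε hε
      rcases Nat.lt_succ_iff_lt_or_eq.1 hi with hlt | heq
      · obtain ⟨C4, hC4, h4⟩ := IH i hlt 1 one_pos
        obtain ⟨C5, hC5, h5⟩ := Bm ε hε
        refine ⟨C4 + C5, by positivity, ?_⟩
        intro h hh u hu
        have := h4 h hh u hu
        have := h5 h hh u hu
        have hε0 := mul_nonneg hε.le (AA_nonneg N h u (m+1))
        nlinarith [AA_nonneg N h u 0, AA_nonneg N h u m]
      · subst heq
        exact Bm ε hε


/-- **Corollary 2.4 (1).**  For all `N, j, k ∈ ℕ` there is `C > 0`, independent of `h ∈ (0,1)`,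
such that `‖⟨x⟩^N D₊ʲu‖_{L²_h} ≤ C (‖⟨x⟩^N u‖_{L²_h} + ‖⟨x⟩^N D₊^{j+k}u‖_{L²_h})` whenever the
two right-hand mesh functions lie in `L²_h`. -/
theorem discrete_weighted_sobolev_L2 (N j k : ℕ) :
    ∃ C > (0 : ℝ), ∀ h : ℝ, h ∈ Set.Ioo (0 : ℝ) 1 → ∀ u : ℤ → ℝ,
      MemL2 (fun m => jp h m ^ N * u m) →
      MemL2 (fun m => jp h m ^ N * (Dp h)^[j + k] u m) →
        nrm h (fun m => jp h m ^ N * (Dp h)^[j] u m)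
          ≤ C * (nrm h (fun m => jp h m ^ N * u m)
              + nrm h (fun m => jp h m ^ N * (Dp h)^[j + k] u m)) := by
  rcases Nat.eq_zero_or_pos k with hk | hk
  · subst hk
    refine ⟨1, one_pos, ?_⟩
    intro h hh u h1 h2
    have n1 := Real.sqrt_nonneg (∑' n : ℤ, ((fun m => jp h m ^ N * u m) n)^2 * h)
    have e : j + 0 = j := Nat.add_zero j
    rw [e]
    have n1' : 0 ≤ nrm h (fun m => jp h m ^ N * u m) := Real.sqrt_nonneg _
    linarith
  · have hj : j < j + k := by omega
    obtain ⟨C, hC, hb⟩ := iterLem N (j+k) j hj 1 one_pos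
    refine ⟨C + 1, by positivity, ?_⟩
    intro h hh u h1 h2
    have hu : Summable (fun n => (jp h n ^ N * u n)^2) := h1
    have key := hb h hh u hu
    have e0 : AA N h u 0 = nrm h (fun m => jp h m ^ N * u m) := rfl
    have ej : AA N h u j = nrm h (fun m => jp h m ^ N * (Dp h)^[j] u m) := rfl
    have em : AA N h u (j+k) = nrm h (fun m => jp h m ^ N * (Dp h)^[j+k] u m) := rfl
    rw [e0, ej, em] at key
    have n1 : 0 ≤ nrm h (fun m => jp h m ^ N * u m) := Real.sqrt_nonneg _
    have n2 : 0 ≤ nrm h (fun m => jp h m ^ N * (Dp h)^[j+k] u m) := Real.sqrt_nonneg _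
    nlinarith [mul_nonneg hC.le n1, mul_nonneg hC.le n2]
end
end
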